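/- Let r ≤ n, let N ∈ ℝ^{n×r} have full column rank r, let Λ_w be an r×r diagonal matrix with positive diagonal entries, and set Ξ = C^{-1/2} N Λ_w with singular value decomposition Ξ = U Λ_ξ Vᵀ, where Uᵀ U = Vᵀ V = I_r and Λ_ξ = diag(ξ_1,…,ξ_r), ξ_i > 0. If a ∈ ℝ^{n×r} satisfies aᵀ Σ a = I_r and tr(aᵀ Λ_σ N Λ_w) = Σ_{i=1}^r ξ_i, then a = Λ_σ^{-1} C^{-1/2} U Vᵀ; that is, the maximizer is unique. -/

import Mathlib

open Matrix BigOperators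

/-- The positive semidefinite square root of a positive semidefinite matrix
(the definition of `Matrix.PosSemidef.sqrt` in the older Mathlib, since removed). -/
noncomputable def Matrix.PosSemidef.sqrt {n : Type*} [Fintype n] [DecidableEq n]
    {A : Matrix n n ℝ} (hA : A.PosSemidef) : Matrix n n ℝ :=
  hA.1.eigenvectorUnitary.1 * diagonal (fun i => Real.sqrt (hA.1.eigenvalues i)) *
    (star hA.1.eigenvectorUnitary : Matrix n n ℝ)

/-!
The substitution `b = C^{1/2} Λ_σ a` turns the constraint into `bᵀ b = I` and the objective
into `tr(bᵀ Ξ)`. With `Ξ = U Λ_ξ Vᵀ` and `X = U - b V`, the weighted column norms satisfy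
`∑ ξ_i ‖X_i‖² = 2 (∑ ξ_i - tr(bᵀ Ξ))`, so attaining `∑ ξ_i` forces `X = 0`, i.e. `b = U Vᵀ`.
-/

namespace Matrix

variable {m n : Type*} [Fintype m] [Fintype n] [DecidableEq n]

namespace PosSemidef

variable {A : Matrix n n ℝ} (hA : A.PosSemidef)

theorem sqrt_mul_self : hA.sqrt * hA.sqrt = A := by
  have hu : star (hA.1.eigenvectorUnitary : Matrix n n ℝ) * hA.1.eigenvectorUnitary = 1 :=
    Unitary.star_mul_self_of_mem hA.1.eigenvectorUnitary.2
  have hD : diagonal (fun i => √(hA.1.eigenvalues i)) * diagonal (fun i => √(hA.1.eigenvalues i))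
      = diagonal (RCLike.ofReal ∘ hA.1.eigenvalues) := by
    rw [diagonal_mul_diagonal]
    congr 1
    ext i
    simp [Real.mul_self_sqrt (hA.eigenvalues_nonneg i)]
  conv_rhs => rw [hA.1.spectral_theorem, Unitary.conjStarAlgAut_apply, ← hD]
  simp only [sqrt, Matrix.mul_assoc]
  rw [← Matrix.mul_assoc (star _) _, hu, Matrix.one_mul]

theorem transpose_sqrt : hA.sqrtᵀ = hA.sqrt := by
  simp [sqrt, transpose_mul, star_eq_conjTranspose, Matrix.mul_assoc]

end PosSemidef

theorem PosDef.isUnit_det_sqrt {A : Matrix n n ℝ} (hA : A.PosDef) :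
    IsUnit hA.posSemidef.sqrt.det := by
  have h := hA.det_pos.ne'
  rw [← hA.posSemidef.sqrt_mul_self, det_mul] at h
  exact isUnit_iff_ne_zero.mpr (left_ne_zero_of_mul h)

theorem trace_diagonal_mul_transpose_mul_self (ξ : n → ℝ) (X : Matrix m n ℝ) :
    (diagonal ξ * (Xᵀ * X)).trace = ∑ i, ξ i * ∑ k, X k i ^ 2 := by
  simp only [trace, diag, diagonal_mul]
  simp only [mul_apply, transpose_apply, sq]

theorem eq_zero_of_trace_diagonal_mul_transpose_mul_self_eq_zero {ξ : n → ℝ} (hξ : ∀ i, 0 < ξ i)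
    {X : Matrix m n ℝ} (h : (diagonal ξ * (Xᵀ * X)).trace = 0) : X = 0 := by
  rw [trace_diagonal_mul_transpose_mul_self] at h
  ext k i
  have hcol := (Finset.sum_eq_zero_iff_of_nonneg fun i _ =>
    mul_nonneg (hξ i).le (Finset.sum_nonneg fun k _ => sq_nonneg (X k i))).mp h i
      (Finset.mem_univ _)
  have hki := (Finset.sum_eq_zero_iff_of_nonneg fun k _ => sq_nonneg (X k i)).mp
    ((mul_eq_zero.mp hcol).resolve_left (hξ i).ne') k (Finset.mem_univ _)
  simpa using hki

theorem trace_diagonal_mul_transpose_mul_self_sub_mul {b U : Matrix m n ℝ} {V : Matrix n n ℝ}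
    (ξ : n → ℝ) (hb : bᵀ * b = 1) (hU : Uᵀ * U = 1) (hV : Vᵀ * V = 1) :
    (diagonal ξ * ((U - b * V)ᵀ * (U - b * V))).trace =
      2 * (∑ i, ξ i - (bᵀ * (U * diagonal ξ * Vᵀ)).trace) := by
  have hgram : (U - b * V)ᵀ * (U - b * V) = (2 : ℝ) • 1 - Uᵀ * b * V - Vᵀ * bᵀ * U := by
    have hbV : (b * V)ᵀ * (b * V) = 1 := by
      rw [transpose_mul, Matrix.mul_assoc, ← Matrix.mul_assoc bᵀ, hb, Matrix.one_mul, hV]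
    rw [transpose_sub, Matrix.sub_mul, Matrix.mul_sub, Matrix.mul_sub, hU, hbV, transpose_mul,
      two_smul]
    simp only [Matrix.mul_assoc]
    abel
  have hcross : (diagonal ξ * (Uᵀ * b * V)).trace = (bᵀ * (U * diagonal ξ * Vᵀ)).trace := by
    rw [← trace_transpose]
    simp only [transpose_mul, diagonal_transpose, transpose_transpose, Matrix.mul_assoc]
    rw [trace_mul_comm]
    simp only [Matrix.mul_assoc]
  have hcross' : (diagonal ξ * (Vᵀ * bᵀ * U)).trace = (bᵀ * (U * diagonal ξ * Vᵀ)).trace := by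
    rw [trace_mul_comm, Matrix.mul_assoc, Matrix.mul_assoc, trace_mul_comm]
    simp only [Matrix.mul_assoc]
  rw [hgram, Matrix.mul_sub, Matrix.mul_sub, trace_sub, trace_sub, hcross, hcross',
    Matrix.mul_smul, Matrix.mul_one, trace_smul, trace_diagonal, smul_eq_mul]
  ring

theorem eq_mul_transpose_of_trace_transpose_mul_eq_sum {b U : Matrix m n ℝ} {V : Matrix n n ℝ}
    {ξ : n → ℝ} (hξ : ∀ i, 0 < ξ i) (hb : bᵀ * b = 1) (hU : Uᵀ * U = 1) (hV : Vᵀ * V = 1)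
    (htr : (bᵀ * (U * diagonal ξ * Vᵀ)).trace = ∑ i, ξ i) : b = U * Vᵀ := by
  have hUbV : U - b * V = 0 := eq_zero_of_trace_diagonal_mul_transpose_mul_self_eq_zero hξ <| by
    rw [trace_diagonal_mul_transpose_mul_self_sub_mul ξ hb hU hV, htr, sub_self, mul_zero]
  rw [sub_eq_zero.mp hUbV, Matrix.mul_assoc, mul_eq_one_comm.mp hV, Matrix.mul_one]

end Matrix

theorem stmt_9_general {n r : ℕ}
    (S : Matrix (Fin n) (Fin n) ℝ)
    (Ls : Matrix (Fin n) (Fin n) ℝ)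
    (hLs : Ls = Matrix.diagonal (fun i => Real.sqrt (S i i)))
    (C : Matrix (Fin n) (Fin n) ℝ) (hC : C = Ls⁻¹ * S * Ls⁻¹)
    (hCpd : C.PosDef)
    (N : Matrix (Fin n) (Fin r) ℝ)
    (Lw : Matrix (Fin r) (Fin r) ℝ)
    (Xi : Matrix (Fin n) (Fin r) ℝ)
    (hXi : Xi = (hCpd.posSemidef.sqrt)⁻¹ * N * Lw)
    (U : Matrix (Fin n) (Fin r) ℝ) (V : Matrix (Fin r) (Fin r) ℝ)
    (ξ : Fin r → ℝ) (hξ : ∀ i, 0 < ξ i)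
    (hU : Uᵀ * U = 1) (hV : Vᵀ * V = 1)
    (hSVD : Xi = U * Matrix.diagonal ξ * Vᵀ)
    (a : Matrix (Fin n) (Fin r) ℝ) (ha : aᵀ * S * a = 1)
    (hmax : (aᵀ * Ls * N * Lw).trace = ∑ i, ξ i) :
    a = Ls⁻¹ * (hCpd.posSemidef.sqrt)⁻¹ * U * Vᵀ := by
  set M := hCpd.posSemidef.sqrt
  have hM : IsUnit M.det := hCpd.isUnit_det_sqrt
  have hLsU : IsUnit Ls.det := by
    have h := hCpd.det_pos.ne'
    rw [hC, det_mul, det_mul] at h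
    exact isUnit_nonsing_inv_det_iff.mp
      (isUnit_iff_ne_zero.mpr (left_ne_zero_of_mul (left_ne_zero_of_mul h)))
  have hS : Ls * (M * M) * Ls = S := by
    rw [hCpd.posSemidef.sqrt_mul_self, hC, Matrix.mul_assoc, nonsing_inv_mul_cancel_right _ _ hLsU,
      mul_nonsing_inv_cancel_left _ _ hLsU]
  have hLsT : Lsᵀ = Ls := hLs ▸ diagonal_transpose _
  have hbT : (M * (Ls * a))ᵀ = aᵀ * Ls * M := by
    rw [transpose_mul, transpose_mul, hLsT, hCpd.posSemidef.transpose_sqrt, Matrix.mul_assoc]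
  have hb : (M * (Ls * a))ᵀ * (M * (Ls * a)) = 1 := by
    rw [hbT, ← ha, ← hS]
    simp only [Matrix.mul_assoc]
  have htr : ((M * (Ls * a))ᵀ * (U * diagonal ξ * Vᵀ)).trace = ∑ i, ξ i := by
    rw [hbT, ← hSVD, hXi, ← hmax]
    simp only [Matrix.mul_assoc, mul_nonsing_inv_cancel_left _ _ hM]
  calc a = Ls⁻¹ * M⁻¹ * (M * (Ls * a)) := by
        rw [Matrix.mul_assoc, nonsing_inv_mul_cancel_left _ _ hM,
          nonsing_inv_mul_cancel_left _ _ hLsU]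
    _ = Ls⁻¹ * M⁻¹ * U * Vᵀ := by
        rw [eq_mul_transpose_of_trace_transpose_mul_eq_sum hξ hb hU hV htr]
        simp only [Matrix.mul_assoc]

/-- **Proxy-VAR OASIS uniqueness.** If `N` has full column rank `r`, all singular
values `ξ_i` of `Ξ = C^{-1/2} N Λ_w` are positive, and `a` with `aᵀ Σ a = I_r`
attains `tr(aᵀ Λ_σ N Λ_w) = Σ_i ξ_i`, then `a = Λ_σ⁻¹ C^{-1/2} U Vᵀ`. -/
theorem stmt_9 {n r : ℕ} (hr : r ≤ n)
    (S : Matrix (Fin n) (Fin n) ℝ) (hS : S.PosDef)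
    (Ls : Matrix (Fin n) (Fin n) ℝ)
    (hLs : Ls = Matrix.diagonal (fun i => Real.sqrt (S i i)))
    (C : Matrix (Fin n) (Fin n) ℝ) (hC : C = Ls⁻¹ * S * Ls⁻¹)
    (hCpd : C.PosDef)
    (N : Matrix (Fin n) (Fin r) ℝ) (hN : N.rank = r)
    (w : Fin r → ℝ) (hw : ∀ i, 0 < w i)
    (Lw : Matrix (Fin r) (Fin r) ℝ) (hLw : Lw = Matrix.diagonal w)
    (Xi : Matrix (Fin n) (Fin r) ℝ)
    (hXi : Xi = (hCpd.posSemidef.sqrt)⁻¹ * N * Lw)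
    (U : Matrix (Fin n) (Fin r) ℝ) (V : Matrix (Fin r) (Fin r) ℝ)
    (ξ : Fin r → ℝ) (hξ : ∀ i, 0 < ξ i)
    (hU : Uᵀ * U = 1) (hV : Vᵀ * V = 1)
    (hSVD : Xi = U * Matrix.diagonal ξ * Vᵀ)
    (a : Matrix (Fin n) (Fin r) ℝ) (ha : aᵀ * S * a = 1)
    (hmax : (aᵀ * Ls * N * Lw).trace = ∑ i, ξ i) :
    a = Ls⁻¹ * (hCpd.posSemidef.sqrt)⁻¹ * U * Vᵀ :=
  stmt_9_general S Ls hLs C hC hCpd N Lw Xi hXi U V ξ hξ hU hV hSVD a ha hmax
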